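/- Let E be a finite type, ϑ ∈ ℂ^E a unit vector, and φ : E × E → ℂ a nonzero function. Define ψ⁻ : Fin 2 × Fin 2 → ℂ by ψ⁻(0,1) = 1/√2, ψ⁻(1,0) = −1/√2, and ψ⁻(a,a) = 0, and define Θ : (Fin 2 × E) × (Fin 2 × E) → ℂ by Θ((a₁,e₁),(a₂,e₂)) = ψ⁻(a₁,a₂)·φ(e₁,e₂). Suppose Θ is swap-invariant, i.e., Θ((a₂,e₂),(a₁,e₁)) = Θ((a₁,e₁),(a₂,e₂)) for all a₁, a₂ ∈ Fin 2 and e₁, e₂ ∈ E. Then Θ does not lie in the linear span of the set of vectors v : (Fin 2 × E) × (Fin 2 × E) → ℂ of the form v(x, y) = θ(x)·ω(y) or v(x, y) = ω(x)·θ(y) for some ω : Fin 2 × E → ℂ, where θ : Fin 2 × E → ℂ is defined by θ(a, e) = ϑ(e) if a = 0 and θ(a, e) = 0 if a = 1. -/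
import Mathlib


open BigOperators
open scoped Classical

noncomputable section

/-- The antisymmetric Bell (singlet) state on two qubits, as a function on pairs. -/
def psiMinus : Fin 2 × Fin 2 → ℂ := fun p =>
  if p = ((0 : Fin 2), (1 : Fin 2)) then ((1 / Real.sqrt 2 : ℝ) : ℂ)
  else if p = ((1 : Fin 2), (0 : Fin 2)) then -((1 / Real.sqrt 2 : ℝ) : ℂ)
  else 0

/-- The product vector `θ = |0⟩ ⊗ ϑ` on `Fin 2 × E`. -/
def thetaVec {E : Type} (ϑ : E → ℂ) : Fin 2 × E → ℂ :=
  fun p => if p.1 = (0 : Fin 2) then ϑ p.2 else 0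

/-- the singlet tensored with any part on `E × E`, if swap-invariant,
does not lie in the span of vectors that are the product vector `θ` on at least one of
the two subsystems. -/
theorem singlet_not_in_almost_product_span
    {E : Type} [Fintype E] [DecidableEq E]
    (ϑ : E → ℂ) (hϑ : ∑ e, (starRingEnd ℂ) (ϑ e) * ϑ e = 1)
    (φ : E × E → ℂ) (hφ : φ ≠ 0)
    (Θ : (Fin 2 × E) × (Fin 2 × E) → ℂ)
    (hΘ : ∀ (a₁ a₂ : Fin 2) (e₁ e₂ : E),
      Θ ((a₁, e₁), (a₂, e₂)) = psiMinus (a₁, a₂) * φ (e₁, e₂))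
    (hswap : ∀ (a₁ a₂ : Fin 2) (e₁ e₂ : E),
      Θ ((a₂, e₂), (a₁, e₁)) = Θ ((a₁, e₁), (a₂, e₂))) :
    Θ ∉ Submodule.span ℂ
      {v : (Fin 2 × E) × (Fin 2 × E) → ℂ | ∃ ω : Fin 2 × E → ℂ,
        v = (fun p => thetaVec ϑ p.1 * ω p.2) ∨ v = (fun p => ω p.1 * thetaVec ϑ p.2)} := by
  intro hmem
  set c : ℂ := ((1 / Real.sqrt 2 : ℝ) : ℂ) with hc_def
  have hc : c ≠ 0 := by
    simp only [hc_def, Ne, Complex.ofReal_eq_zero, div_eq_zero_iff]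
    push_neg
    refine ⟨one_ne_zero, ?_⟩
    positivity
  have hnc : (-c) ≠ 0 := neg_ne_zero.mpr hc
  have hpsi10 : psiMinus ((1 : Fin 2), (0 : Fin 2)) = -c := by
    simp [psiMinus, hc_def]
  have hpsi01 : psiMinus ((0 : Fin 2), (1 : Fin 2)) = c := by
    simp [psiMinus, hc_def]
  -- the evaluation linear map T
  let T : (((Fin 2 × E) × (Fin 2 × E)) → ℂ) →ₗ[ℂ] ((E × E) → ℂ) :=
    { toFun := fun v => fun q => v (((1 : Fin 2), q.1), ((0 : Fin 2), q.2))
      map_add' := by intro v w; rfl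
      map_smul' := by intro a v; rfl }
  -- the tensor map M
  let M : (E → ℂ) →ₗ[ℂ] ((E × E) → ℂ) :=
    { toFun := fun α => fun q => α q.1 * ϑ q.2
      map_add' := by intro α β; funext q; simp [add_mul]
      map_smul' := by intro a α; funext q; simp [mul_assoc] }
  have hspan : Submodule.span ℂ
      {v : (Fin 2 × E) × (Fin 2 × E) → ℂ | ∃ ω : Fin 2 × E → ℂ,
        v = (fun p => thetaVec ϑ p.1 * ω p.2) ∨ v = (fun p => ω p.1 * thetaVec ϑ p.2)}
      ≤ (LinearMap.range M).comap T := by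
    rw [Submodule.span_le]
    rintro v ⟨ω, h | h⟩
    · subst h
      refine ⟨0, ?_⟩
      funext q
      simp [T, M, thetaVec]
    · subst h
      refine ⟨fun e => ω ((1 : Fin 2), e), ?_⟩
      funext q
      simp [T, M, thetaVec]
  obtain ⟨α, hα⟩ := hspan hmem
  have hTΘ : ∀ q : E × E, α q.1 * ϑ q.2 = -c * φ q := by
    intro q
    have h := congrFun hα q
    simp only [T, M, LinearMap.coe_mk, AddHom.coe_mk] at h
    rw [h, hΘ 1 0 q.1 q.2, hpsi10]
  have hφα : ∀ q : E × E, φ q = (-c)⁻¹ * (α q.1 * ϑ q.2) := by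
    intro q
    rw [hTΘ q, inv_mul_cancel_left₀ hnc]
  -- antisymmetry of φ
  have hanti : ∀ e₁ e₂ : E, φ (e₂, e₁) = -φ (e₁, e₂) := by
    intro e₁ e₂
    have h := hswap 0 1 e₁ e₂
    rw [hΘ 1 0 e₂ e₁, hΘ 0 1 e₁ e₂, hpsi10, hpsi01] at h
    exact mul_left_cancel₀ hc
      (by linear_combination -h : c * φ (e₂, e₁) = c * (-φ (e₁, e₂)))
  -- antisymmetry transfers to α ⊗ ϑ
  have hanti' : ∀ e₁ e₂ : E, α e₂ * ϑ e₁ = -(α e₁ * ϑ e₂) := by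
    intro e₁ e₂
    have h := hanti e₁ e₂
    rw [hφα (e₂, e₁), hφα (e₁, e₂)] at h
    have hci : (-c)⁻¹ ≠ 0 := inv_ne_zero hnc
    exact mul_left_cancel₀ hci
      (by linear_combination h : (-c)⁻¹ * (α e₂ * ϑ e₁) = (-c)⁻¹ * (-(α e₁ * ϑ e₂)))
  -- α = -k ϑ where k = ⟨ϑ, α⟩
  set k : ℂ := ∑ e, (starRingEnd ℂ) (ϑ e) * α e with hk_def
  have hαk : ∀ e, α e = -k * ϑ e := by
    intro e₂
    have h1 : ∑ e₁, (starRingEnd ℂ) (ϑ e₁) * (α e₂ * ϑ e₁) =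
        ∑ e₁, -((starRingEnd ℂ) (ϑ e₁) * α e₁ * ϑ e₂) := by
      apply Finset.sum_congr rfl
      intro e₁ _
      rw [hanti' e₁ e₂]
      ring
    have h2 : ∑ e₁, (starRingEnd ℂ) (ϑ e₁) * (α e₂ * ϑ e₁) = α e₂ := by
      calc ∑ e₁, (starRingEnd ℂ) (ϑ e₁) * (α e₂ * ϑ e₁)
          = α e₂ * ∑ e₁, (starRingEnd ℂ) (ϑ e₁) * ϑ e₁ := by
            rw [Finset.mul_sum]
            exact Finset.sum_congr rfl (fun e₁ _ => by ring)
        _ = α e₂ := by rw [hϑ, mul_one]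
    have h3 : ∑ e₁, -((starRingEnd ℂ) (ϑ e₁) * α e₁ * ϑ e₂) = -k * ϑ e₂ := by
      rw [Finset.sum_neg_distrib, ← Finset.sum_mul, ← hk_def, neg_mul]
    rw [h2, h3] at h1
    exact h1
  -- diagonal vanishing forces k = 0
  have hdiag : ∀ e, φ (e, e) = 0 := by
    intro e
    have h := hanti e e
    linear_combination h / 2
  have hkϑ : ∀ e, k * (ϑ e * ϑ e) = 0 := by
    intro e
    have h := hdiag e
    rw [hφα (e, e), hαk e] at h
    rcases mul_eq_zero.mp h with h' | h'
    · exact absurd h' (inv_ne_zero hnc)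
    · linear_combination -h'
  have hθne : ∃ e, ϑ e ≠ 0 := by
    by_contra h
    push_neg at h
    simp only [h, map_zero, zero_mul, Finset.sum_const_zero] at hϑ
    exact zero_ne_one hϑ
  obtain ⟨e₀, he₀⟩ := hθne
  have hk0 : k = 0 := by
    rcases mul_eq_zero.mp (hkϑ e₀) with h' | h'
    · exact h'
    · rcases mul_eq_zero.mp h' with h'' | h'' <;> exact absurd h'' he₀
  -- then φ = 0
  apply hφ
  funext q
  rw [show φ q = φ (q.1, q.2) from rfl, hφα (q.1, q.2), hαk q.1, hk0]
  simp

end
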